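/- (Relation between the left and right Burgunder splittings.) Let K be a commutative ring which is a ℚ-algebra and Λ a finite type. Let τ : FreeAlgebra K Λ ⊗_K FreeAlgebra K Λ → FreeAlgebra K Λ ⊗_K FreeAlgebra K Λ be the K-linear map determined by τ(a ⊗ b) = −(b ⊗ a). Then for every Lie polynomial P ∈ FreeAlgebra K Λ: ∑_{λ∈Λ} 𝔇^R(∂^R_λ(P)) ⊗ X_λ = τ( ∑_{λ∈Λ} X_λ ⊗ 𝔇^L(∂^L_λ(P)) ). -/

import Mathlib

open scoped TensorProduct

attribute [local instance 100] LieRing.ofAssociativeRing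

/-- Left-iterated Lie bracket `[Z₁, …, Z_p]_L` (equal to `Z₁` for a singleton list, `0` for
the empty list). -/
def bracketL {L : Type*} [LieRing L] : List L → L
  | [] => 0
  | [z] => z
  | z :: w :: ws => ⁅z, bracketL (w :: ws)⁆

/-- Right-iterated Lie bracket `[Z₁, …, Z_p]_R` (equal to `Z₁` for a singleton list, `0` for
the empty list). -/
def bracketR {L : Type*} [LieRing L] : List L → L
  | [] => 0
  | z :: zs => zs.foldl (fun acc u => ⁅acc, u⁆) z

/-- The word `X_{λ₁} ⋯ X_{λ_p}` given by a list of letters. -/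
def word (K : Type*) [CommRing K] {Λ : Type*} (ℓ : List Λ) : FreeAlgebra K Λ :=
  (ℓ.map (FreeAlgebra.ι K)).prod

/-- `𝔇^L`, the `K`-linear map with `𝔇^L(X_{λ₁} ⋯ X_{λ_p}) = [X_{λ₁}, …, X_{λ_p}]_L` and
`𝔇^L(1) = 0`. -/
noncomputable def DynL (K : Type*) [CommRing K] (Λ : Type*) :
    FreeAlgebra K Λ →ₗ[K] FreeAlgebra K Λ :=
  (FreeAlgebra.basisFreeMonoid K Λ).constr K fun w =>
    bracketL (w.toList.map (FreeAlgebra.ι K))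

/-- `𝔇^R`, the `K`-linear map with `𝔇^R(X_{λ₁} ⋯ X_{λ_p}) = [X_{λ₁}, …, X_{λ_p}]_R` and
`𝔇^R(1) = 0`. -/
noncomputable def DynR (K : Type*) [CommRing K] (Λ : Type*) :
    FreeAlgebra K Λ →ₗ[K] FreeAlgebra K Λ :=
  (FreeAlgebra.basisFreeMonoid K Λ).constr K fun w =>
    bracketR (w.toList.map (FreeAlgebra.ι K))

/-- `∂^L_μ`, the `K`-linear map sending a word starting with `μ` to the word with the first
letter removed, and all other words (and `1`) to `0`. -/
noncomputable def partialL (K : Type*) [CommRing K] {Λ : Type*} [DecidableEq Λ] (μ : Λ) :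
    FreeAlgebra K Λ →ₗ[K] FreeAlgebra K Λ :=
  (FreeAlgebra.basisFreeMonoid K Λ).constr K fun w =>
    if w.toList.head? = some μ then word K w.toList.tail else 0

/-- `∂^R_μ`, the `K`-linear map sending a word ending with `μ` to the word with the last
letter removed, and all other words (and `1`) to `0`. -/
noncomputable def partialR (K : Type*) [CommRing K] {Λ : Type*} [DecidableEq Λ] (μ : Λ) :
    FreeAlgebra K Λ →ₗ[K] FreeAlgebra K Λ :=
  (FreeAlgebra.basisFreeMonoid K Λ).constr K fun w =>
    if w.toList.getLast? = some μ then word K w.toList.dropLast else 0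

/-- The `K`-linear map `τ` on `A ⊗[K] A` determined by `τ(a ⊗ b) = −(b ⊗ a)`. -/
noncomputable def negSwap (K : Type*) [CommRing K] (Λ : Type*) :
    FreeAlgebra K Λ ⊗[K] FreeAlgebra K Λ →ₗ[K] FreeAlgebra K Λ ⊗[K] FreeAlgebra K Λ :=
  -(TensorProduct.comm K (FreeAlgebra K Λ) (FreeAlgebra K Λ)).toLinearMap


/-!
The antipode `S` of the free algebra, the anti-automorphism with `S(X_λ) = -X_λ`, sends a word
`w` of length `p` to `(-1)^p` times its reversal. Reversing a word turns its right-iterated bracket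
into `(-1)^(p+1)` times the left-iterated one, and turns `∂^R_μ` into `∂^L_μ`; hence
`𝔇^R = -𝔇^L ∘ S` and `∂^L_μ ∘ S = -S ∘ ∂^R_μ`. Since `S` is an anti-automorphism it acts as `-1`
on Lie polynomials, so for such `P` we get `𝔇^R(∂^R_μ P) = -𝔇^L(∂^L_μ P)` for every letter `μ`,
which is the claimed identity term by term.
-/

section IteratedBracket

variable {L : Type*} [LieRing L]

lemma bracketL_cons_of_ne_nil (a : L) {l : List L} (hl : l ≠ []) :
    bracketL (a :: l) = ⁅a, bracketL l⁆ := by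
  cases l with
  | nil => exact absurd rfl hl
  | cons z zs => rfl

lemma bracketR_concat_of_ne_nil {l : List L} (hl : l ≠ []) (a : L) :
    bracketR (l ++ [a]) = ⁅bracketR l, a⁆ := by
  cases l with
  | nil => exact absurd rfl hl
  | cons z zs => simp [bracketR, List.foldl_append]

lemma bracketR_eq_zsmul_bracketL_reverse (l : List L) :
    bracketR l = ((-1 : ℤ) ^ (l.length + 1)) • bracketL l.reverse := by
  induction l using List.reverseRecOn with
  | nil => simp [bracketR, bracketL]
  | append_singleton l a ih =>
    rcases eq_or_ne l [] with rfl | hl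
    · simp [bracketR, bracketL]
    · rw [bracketR_concat_of_ne_nil hl, ih, List.reverse_concat',
        bracketL_cons_of_ne_nil a (List.reverse_ne_nil_iff.mpr hl), smul_lie, ← lie_skew,
        smul_neg, ← neg_smul, List.length_append, List.length_singleton, pow_succ _ (l.length + 1),
        mul_neg_one]

end IteratedBracket

section FreeAlgebra

variable (K : Type*) [CommRing K] {Λ : Type*}

lemma basisFreeMonoid_eq_word (w : FreeMonoid Λ) :
    FreeAlgebra.basisFreeMonoid K Λ w = word K w.toList := by
  simp only [FreeAlgebra.basisFreeMonoid, Module.Basis.map_apply, Finsupp.coe_basisSingleOne]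
  show FreeAlgebra.equivMonoidAlgebraFreeMonoid.symm (MonoidAlgebra.single w 1) = _
  rw [FreeAlgebra.equivMonoidAlgebraFreeMonoid, AlgEquiv.ofAlgHom_symm_apply]
  simp [MonoidAlgebra.lift_single, FreeMonoid.lift_apply, word]

lemma constr_basisFreeMonoid_word (f : FreeMonoid Λ → FreeAlgebra K Λ) (l : List Λ) :
    (FreeAlgebra.basisFreeMonoid K Λ).constr K f (word K l) = f (FreeMonoid.ofList l) := by
  rw [← FreeMonoid.toList_ofList l, ← basisFreeMonoid_eq_word, Module.Basis.constr_basis,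
    FreeMonoid.toList_ofList]

lemma word_cons (a : Λ) (l : List Λ) : word K (a :: l) = FreeAlgebra.ι K a * word K l := by
  simp [word]

lemma word_append (l₁ l₂ : List Λ) : word K (l₁ ++ l₂) = word K l₁ * word K l₂ := by
  simp [word]

variable (Λ) in
lemma DynL_word (l : List Λ) : DynL K Λ (word K l) = bracketL (l.map (FreeAlgebra.ι K)) := by
  rw [DynL, constr_basisFreeMonoid_word, FreeMonoid.toList_ofList]

variable (Λ) in
lemma DynR_word (l : List Λ) : DynR K Λ (word K l) = bracketR (l.map (FreeAlgebra.ι K)) := by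
  rw [DynR, constr_basisFreeMonoid_word, FreeMonoid.toList_ofList]

lemma partialL_word [DecidableEq Λ] (μ : Λ) (l : List Λ) :
    partialL K μ (word K l) = if l.head? = some μ then word K l.tail else 0 := by
  rw [partialL, constr_basisFreeMonoid_word, FreeMonoid.toList_ofList]

lemma partialR_word [DecidableEq Λ] (μ : Λ) (l : List Λ) :
    partialR K μ (word K l) = if l.getLast? = some μ then word K l.dropLast else 0 := by
  rw [partialR, constr_basisFreeMonoid_word, FreeMonoid.toList_ofList]

variable (Λ) in
noncomputable def antipode : FreeAlgebra K Λ →ₗ[K] FreeAlgebra K Λ :=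
  (MulOpposite.opLinearEquiv K).symm.toLinearMap ∘ₗ
    (FreeAlgebra.lift K fun i => MulOpposite.op (-FreeAlgebra.ι K i)).toLinearMap

lemma antipode_ι (i : Λ) : antipode K Λ (FreeAlgebra.ι K i) = -FreeAlgebra.ι K i := by
  simp [antipode]

lemma antipode_mul (a b : FreeAlgebra K Λ) :
    antipode K Λ (a * b) = antipode K Λ b * antipode K Λ a := by
  simp [antipode]

lemma antipode_word (l : List Λ) :
    antipode K Λ (word K l) = ((-1 : ℤ) ^ l.length) • word K l.reverse := by
  induction l with
  | nil => simp [antipode, word]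
  | cons a l ih =>
    rw [word_cons, antipode_mul, ih, antipode_ι, List.reverse_cons, word_append,
      show word K [a] = FreeAlgebra.ι K a by simp [word], smul_mul_assoc, mul_neg, smul_neg, ← neg_smul,
      List.length_cons, pow_succ, mul_neg_one]

lemma antipode_lie (a b : FreeAlgebra K Λ) :
    antipode K Λ ⁅a, b⁆ = -⁅antipode K Λ a, antipode K Λ b⁆ := by
  simp only [Ring.lie_def, map_sub, antipode_mul, neg_sub]

lemma antipode_of_mem_lieSpan {P : FreeAlgebra K Λ}
    (hP : P ∈ LieSubalgebra.lieSpan K (FreeAlgebra K Λ) (Set.range (FreeAlgebra.ι K))) :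
    antipode K Λ P = -P := by
  induction hP using LieSubalgebra.lieSpan_induction with
  | mem x hx => obtain ⟨i, rfl⟩ := hx; exact antipode_ι K i
  | zero => simp
  | add x y _ _ hx hy => rw [map_add, hx, hy, neg_add]
  | smul c x _ hx => rw [map_smul, hx, smul_neg]
  | lie x y _ _ hx hy => rw [antipode_lie, hx, hy, neg_lie, lie_neg, neg_neg]

variable (Λ) in
lemma DynR_eq_neg_DynL_comp_antipode : DynR K Λ = -(DynL K Λ ∘ₗ antipode K Λ) := by
  refine (FreeAlgebra.basisFreeMonoid K Λ).ext fun w => ?_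
  rw [basisFreeMonoid_eq_word, LinearMap.neg_apply, LinearMap.comp_apply, antipode_word,
    map_zsmul, DynL_word, DynR_word, bracketR_eq_zsmul_bracketL_reverse, List.length_map,
    List.map_reverse, pow_succ, mul_neg_one, neg_smul]

lemma partialL_comp_antipode [DecidableEq Λ] (μ : Λ) :
    partialL K μ ∘ₗ antipode K Λ = -(antipode K Λ ∘ₗ partialR K μ) := by
  refine (FreeAlgebra.basisFreeMonoid K Λ).ext fun w => ?_
  rw [basisFreeMonoid_eq_word, LinearMap.comp_apply, LinearMap.neg_apply, LinearMap.comp_apply,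
    antipode_word, map_zsmul, partialL_word, partialR_word, List.head?_reverse]
  by_cases h : w.toList.getLast? = some μ
  · have hlen : w.toList.length = w.toList.dropLast.length + 1 := by
      have : w.toList ≠ [] := by rintro hnil; simp [hnil] at h
      rw [List.length_dropLast]; have := List.length_pos_iff.mpr this; omega
    rw [if_pos h, if_pos h, List.tail_reverse, antipode_word, hlen, pow_succ, mul_neg_one,
      neg_smul]
  · rw [if_neg h, if_neg h, smul_zero, map_zero, neg_zero]

lemma DynR_partialR_of_antipode_eq_neg [DecidableEq Λ] {P : FreeAlgebra K Λ}
    (hP : antipode K Λ P = -P) (μ : Λ) :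
    DynR K Λ (partialR K μ P) = -DynL K Λ (partialL K μ P) := by
  have hS : antipode K Λ (partialR K μ P) = partialL K μ P := by
    simpa [hP] using (LinearMap.congr_fun (partialL_comp_antipode K μ) P).symm
  rw [DynR_eq_neg_DynL_comp_antipode, LinearMap.neg_apply, LinearMap.comp_apply, hS]

end FreeAlgebra

theorem burgunder_left_right_relation_general (K : Type*) [CommRing K]
    (Λ : Type*) [Fintype Λ] [DecidableEq Λ]
    (P : FreeAlgebra K Λ)
    (hPlie : P ∈ LieSubalgebra.lieSpan K (FreeAlgebra K Λ) (Set.range (FreeAlgebra.ι K))) :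
    (∑ lam : Λ, DynR K Λ (partialR K lam P) ⊗ₜ[K] FreeAlgebra.ι K lam) =
      negSwap K Λ (∑ lam : Λ, FreeAlgebra.ι K lam ⊗ₜ[K] DynL K Λ (partialL K lam P)) := by
  have hP := antipode_of_mem_lieSpan K hPlie
  simp only [negSwap, LinearMap.neg_apply, LinearEquiv.coe_coe, map_sum,
    TensorProduct.comm_tmul, ← TensorProduct.neg_tmul,
    DynR_partialR_of_antipode_eq_neg K hP]

/-- (Relation between the left and right Burgunder splittings.)  For every Lie polynomial
`P`, `∑_λ 𝔇^R(∂^R_λ P) ⊗ X_λ = τ(∑_λ X_λ ⊗ 𝔇^L(∂^L_λ P))`. -/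
theorem burgunder_left_right_relation (K : Type*) [CommRing K] [Algebra ℚ K]
    (Λ : Type*) [Fintype Λ] [DecidableEq Λ]
    (P : FreeAlgebra K Λ)
    (hPlie : P ∈ LieSubalgebra.lieSpan K (FreeAlgebra K Λ) (Set.range (FreeAlgebra.ι K))) :
    (∑ lam : Λ, DynR K Λ (partialR K lam P) ⊗ₜ[K] FreeAlgebra.ι K lam) =
      negSwap K Λ (∑ lam : Λ, FreeAlgebra.ι K lam ⊗ₜ[K] DynL K Λ (partialL K lam P)) :=
  burgunder_left_right_relation_general K Λ P hPlie
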